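/- arXiv:2103.03556 — 4 statements merged into one kernel-verified Lean document; each statement's English description precedes it below -/
import Mathlib

section
/- Weyl's perturbation inequality: if A and P are n×n real symmetric matrices, and M = A + P, then for each i, the i-th smallest eigenvalue μ_i of M and the i-th smallest eigenvalue λ_i of A satisfy |μ_i - λ_i| ≤ ‖P‖, where ‖P‖ is the operator (spectral) norm of P. -/
/-!
Mathlib lists the eigenvalues of a symmetric operator in decreasing order, so the `i`-th smallest
one is `eigenvalues (Fin.rev i)`; sorting identifies `lam`, `mu` with these lists.

Comparison of eigenvalues is a Courant–Fischer dimension count: the eigenvectors of `T` with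
index `≥ i` and those of `T'` with index `≤ i` span subspaces of dimensions `n - i` and `i + 1`,
so they share a nonzero vector `x`. On it the Rayleigh quotient of `T` is at most `λᵢ(T)` and that
of `T'` at least `λᵢ(T')`, so `λᵢ(T') ≤ λᵢ(T) + c` whenever the quadratic forms satisfy
`⟪T' x, x⟫ ≤ ⟪T x, x⟫ + c ‖x‖²`. For `T' = T + P` this holds in both directions with `c`
bounding the eigenvalues of `P` in absolute value.
-/

open Module Submodule RCLike
open scoped InnerProductSpace

namespace Module.Basis

variable {ι K V : Type*} [Field K] [AddCommGroup V] [Module K V]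

theorem finrank_span_image_finset (b : Basis ι K V) (s : Finset ι) :
    finrank K (span K (b '' s)) = s.card := by
  rw [Set.image_eq_range]
  exact (finrank_span_eq_card
    (b.linearIndependent.comp (Subtype.val : ↥(s : Set ι) → ι) Subtype.val_injective)).trans
    (by simp)

theorem repr_eq_zero_of_mem_span_image (b : Basis ι K V) {s : Set ι} {x : V}
    (hx : x ∈ span K (b '' s)) {j : ι} (hj : j ∉ s) : b.repr x j = 0 :=
  Finsupp.notMem_support_iff.mp fun h => hj (b.repr_support_subset_of_mem_span s hx h)

theorem exists_ne_zero_repr_eq_zero [FiniteDimensional K V] {n : ℕ} (b b' : Basis (Fin n) K V)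
    (i : Fin n) :
    ∃ x ≠ 0, (∀ j < i, b.repr x j = 0) ∧ ∀ j, i < j → b'.repr x j = 0 := by
  set U := span K (b '' (Finset.Ici i : Finset (Fin n)))
  set W := span K (b' '' (Finset.Iic i : Finset (Fin n)))
  have hUW : ¬ Disjoint U W := fun h => by
    have := finrank_add_finrank_le_of_disjoint h
    rw [finrank_span_image_finset, finrank_span_image_finset, Fin.card_Ici, Fin.card_Iic,
      finrank_eq_card_basis b, Fintype.card_fin] at this
    omega
  obtain ⟨x, hxU, hxW, hx⟩ : ∃ x ∈ U, x ∈ W ∧ x ≠ 0 := by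
    simpa [Submodule.disjoint_def] using hUW
  refine ⟨x, hx, fun j hj => b.repr_eq_zero_of_mem_span_image hxU ?_,
    fun j hj => b'.repr_eq_zero_of_mem_span_image hxW ?_⟩ <;> simpa

end Module.Basis

namespace LinearMap.IsSymmetric

variable {𝕜 E : Type*} [RCLike 𝕜] [NormedAddCommGroup E] [InnerProductSpace 𝕜 E]
  [FiniteDimensional 𝕜 E] {T T' : E →ₗ[𝕜] E} {n : ℕ}

theorem re_inner_apply_self_eq_sum (hT : T.IsSymmetric) (hn : finrank 𝕜 E = n) (x : E) :
    re ⟪T x, x⟫_𝕜 = ∑ j, hT.eigenvalues hn j * ‖(hT.eigenvectorBasis hn).repr x j‖ ^ 2 := by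
  set b := hT.eigenvectorBasis hn
  rw [← b.sum_inner_mul_inner, map_sum]
  refine Finset.sum_congr rfl fun j _ => ?_
  rw [hT, apply_eigenvectorBasis, inner_smul_right, b.repr_apply_apply, ← inner_conj_symm x,
    mul_assoc, RCLike.conj_mul, ← RCLike.ofReal_pow, ← RCLike.ofReal_mul, RCLike.ofReal_re]

theorem eigenvalue_mul_norm_sq_le_re_inner (hT : T.IsSymmetric) (hn : finrank 𝕜 E = n)
    {x : E} {i : Fin n} (hx : ∀ j, i < j → (hT.eigenvectorBasis hn).repr x j = 0) :
    hT.eigenvalues hn i * ‖x‖ ^ 2 ≤ re ⟪T x, x⟫_𝕜 := by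
  rw [re_inner_apply_self_eq_sum, ← (hT.eigenvectorBasis hn).repr.norm_map,
    EuclideanSpace.norm_sq_eq, Finset.mul_sum]
  refine Finset.sum_le_sum fun j _ => ?_
  rcases le_or_gt j i with hji | hij
  · exact mul_le_mul_of_nonneg_right (hT.eigenvalues_antitone hn hji) (sq_nonneg _)
  · simp [hx j hij]

theorem re_inner_le_eigenvalue_mul_norm_sq (hT : T.IsSymmetric) (hn : finrank 𝕜 E = n)
    {x : E} {i : Fin n} (hx : ∀ j < i, (hT.eigenvectorBasis hn).repr x j = 0) :
    re ⟪T x, x⟫_𝕜 ≤ hT.eigenvalues hn i * ‖x‖ ^ 2 := by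
  rw [re_inner_apply_self_eq_sum, ← (hT.eigenvectorBasis hn).repr.norm_map,
    EuclideanSpace.norm_sq_eq, Finset.mul_sum]
  refine Finset.sum_le_sum fun j _ => ?_
  rcases lt_or_ge j i with hji | hij
  · simp [hx j hji]
  · exact mul_le_mul_of_nonneg_right (hT.eigenvalues_antitone hn hij) (sq_nonneg _)

theorem eigenvalues_le_add_of_re_inner_le (hT : T.IsSymmetric) (hT' : T'.IsSymmetric)
    (hn : finrank 𝕜 E = n) {c : ℝ} (hc : ∀ x, re ⟪T' x, x⟫_𝕜 ≤ re ⟪T x, x⟫_𝕜 + c * ‖x‖ ^ 2)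
    (i : Fin n) : hT'.eigenvalues hn i ≤ hT.eigenvalues hn i + c := by
  obtain ⟨x, hx, hxT, hxT'⟩ := Basis.exists_ne_zero_repr_eq_zero
    (hT.eigenvectorBasis hn).toBasis (hT'.eigenvectorBasis hn).toBasis i
  simp only [OrthonormalBasis.coe_toBasis_repr_apply] at hxT hxT'
  have hx2 : 0 < ‖x‖ ^ 2 := by positivity
  refine le_of_mul_le_mul_right ?_ hx2
  calc hT'.eigenvalues hn i * ‖x‖ ^ 2 ≤ re ⟪T' x, x⟫_𝕜 :=
        hT'.eigenvalue_mul_norm_sq_le_re_inner hn hxT'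
    _ ≤ re ⟪T x, x⟫_𝕜 + c * ‖x‖ ^ 2 := hc x
    _ ≤ hT.eigenvalues hn i * ‖x‖ ^ 2 + c * ‖x‖ ^ 2 := by
        gcongr; exact hT.re_inner_le_eigenvalue_mul_norm_sq hn hxT
    _ = (hT.eigenvalues hn i + c) * ‖x‖ ^ 2 := by ring

theorem abs_re_inner_apply_self_le (hT : T.IsSymmetric) (hn : finrank 𝕜 E = n) {c : ℝ}
    (hc : ∀ j, |hT.eigenvalues hn j| ≤ c) (x : E) : |re ⟪T x, x⟫_𝕜| ≤ c * ‖x‖ ^ 2 := by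
  rw [re_inner_apply_self_eq_sum, ← (hT.eigenvectorBasis hn).repr.norm_map,
    EuclideanSpace.norm_sq_eq, Finset.mul_sum]
  refine (Finset.abs_sum_le_sum_abs _ _).trans (Finset.sum_le_sum fun j _ => ?_)
  rw [abs_mul, abs_sq]
  exact mul_le_mul_of_nonneg_right (hc j) (sq_nonneg _)

theorem abs_eigenvalues_sub_le (hT : T.IsSymmetric) (hT' : T'.IsSymmetric)
    (hn : finrank 𝕜 E = n) {c : ℝ} (hc : ∀ x, |re ⟪T' x, x⟫_𝕜 - re ⟪T x, x⟫_𝕜| ≤ c * ‖x‖ ^ 2)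
    (i : Fin n) : |hT'.eigenvalues hn i - hT.eigenvalues hn i| ≤ c := by
  have h₁ := hT.eigenvalues_le_add_of_re_inner_le hT' hn
    (fun x => by linarith [le_of_abs_le (hc x)]) i
  have h₂ := hT'.eigenvalues_le_add_of_re_inner_le hT hn
    (fun x => by linarith [neg_le_of_abs_le (hc x)]) i
  rw [abs_sub_le_iff]
  constructor <;> linarith

end LinearMap.IsSymmetric

theorem Monotone.eq_comp_rev_of_coe_ofFn_eq {α : Type*} [PartialOrder α] {n : ℕ}
    {f g : Fin n → α} (hf : Monotone f) (hg : Antitone g)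
    (h : (List.ofFn f : Multiset α) = List.ofFn g) : f = g ∘ Fin.rev := by
  have hperm : (List.ofFn f).Perm (List.ofFn (g ∘ Fin.revPerm)) :=
    (Multiset.coe_eq_coe.mp h).trans (Fin.revPerm.ofFn_comp_perm g).symm
  exact List.ofFn_injective <| hperm.eq_of_sortedLE hf.sortedLE_ofFn
    (List.sortedLE_ofFn_iff.mpr fun _ _ hij => hg (Fin.rev_le_rev.mpr hij))

namespace Matrix.IsSymm

variable {n : ℕ} {A : Matrix (Fin n) (Fin n) ℝ}

theorem isSymmetric_toEuclideanLin (hA : A.IsSymm) : A.toEuclideanLin.IsSymmetric :=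
  isSymmetric_toEuclideanLin_iff.mpr (isHermitian_iff_isSymm.mpr hA)

theorem roots_charpoly_eq_ofFn_eigenvalues (hA : A.IsSymm) :
    A.charpoly.roots =
      List.ofFn (hA.isSymmetric_toEuclideanLin.eigenvalues finrank_euclideanSpace_fin) := by
  rw [← Matrix.charpoly_toLin A (EuclideanSpace.basisFun (Fin n) ℝ).toBasis,
    ← toEuclideanLin_eq_toLin_orthonormal,
    hA.isSymmetric_toEuclideanLin.roots_charpoly_eq_eigenvalues finrank_euclideanSpace_fin,
    Fin.univ_val_map]
  rfl

end Matrix.IsSymm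

/-- Weyl's perturbation inequality: if `A` and `P` are real symmetric `n×n` matrices and
`M = A + P`, then the `i`-th smallest eigenvalue `μ i` of `M` and the `i`-th smallest
eigenvalue `λ i` of `A` satisfy `|μ i - λ i| ≤ c` for any bound `c` on the absolute values
of the eigenvalues of `P` (in particular for the spectral norm of `P`).
Eigenvalue sequences are encoded as monotone enumerations (with multiplicity) of the roots
of the characteristic polynomial. -/
theorem weyl_perturbation (n : ℕ) (A P : Matrix (Fin n) (Fin n) ℝ)
    (hA : A.IsSymm) (hP : P.IsSymm)
    (lam mu : Fin n → ℝ) (hlam_mono : Monotone lam) (hmu_mono : Monotone mu)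
    (hlam : A.charpoly.roots = ↑(List.ofFn lam))
    (hmu : (A + P).charpoly.roots = ↑(List.ofFn mu))
    (c : ℝ) (hc : ∀ x ∈ P.charpoly.roots, |x| ≤ c) :
    ∀ i, |mu i - lam i| ≤ c := by
  intro i
  have hn := finrank_euclideanSpace_fin (𝕜 := ℝ) (n := n)
  have hT := hA.isSymmetric_toEuclideanLin
  have hT' := (hA.add hP).isSymmetric_toEuclideanLin
  have hS := hP.isSymmetric_toEuclideanLin
  rw [hlam_mono.eq_comp_rev_of_coe_ofFn_eq (hT.eigenvalues_antitone hn)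
      (hlam.symm.trans hA.roots_charpoly_eq_ofFn_eigenvalues),
    hmu_mono.eq_comp_rev_of_coe_ofFn_eq (hT'.eigenvalues_antitone hn)
      (hmu.symm.trans (hA.add hP).roots_charpoly_eq_ofFn_eigenvalues)]
  have hSc : ∀ j, |hS.eigenvalues hn j| ≤ c := fun j =>
    hc _ (hP.roots_charpoly_eq_ofFn_eigenvalues ▸ by simp)
  refine hT.abs_eigenvalues_sub_le hT' hn (fun x => ?_) _
  simpa [map_add, inner_add_left] using hS.abs_re_inner_apply_self_le hn hSc x
end

section
/- Vertex deletion eigenvalue bound for weighted graphs: let L be the Laplacian of an undirected weighted graph G with eigenvalues λ₁ ≤ ... ≤ λ_n, let v be a vertex all of whose incident edge weights are at most δ, and let L^v be the Laplacian of the graph obtained by deleting v, with eigenvalues λ^v₁ ≤ ... ≤ λ^v_{n-1}. Then λ_i - δ ≤ λ^v_i for all 1 ≤ i ≤ n-1. -/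
/-!
The principal submatrix of `L` at the vertices other than `v` is `Lᵛ + Iᵥ` with `Iᵥ ≤ δ`, so in
the quadratic-form order `L` compressed to the coordinate hyperplane `xᵥ = 0` is at most
`Lᵛ + δ`. A Courant–Fischer dimension count turns this into `λᵢ ≤ λᵛᵢ + δ`: the span of the
first `i + 1` eigenvectors of `Lᵛ`, embedded by extension by zero, meets the orthogonal
complement of the first `i` eigenvectors of `L`, and on a nonzero vector of that intersection
the Rayleigh quotient of `L` is at least `λᵢ` while that of `Lᵛ + δ` is at most `λᵛᵢ + δ`.
-/

open scoped RealInnerProductSpace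
open Matrix

theorem Matrix.IsHermitian.exists_orthonormalBasis_toEuclideanLin_eq_smul {N : ℕ}
    {A : Matrix (Fin N) (Fin N) ℝ} (hA : A.IsHermitian) {lam : Fin N → ℝ} (hlam : Monotone lam)
    (hroots : A.charpoly.roots = ↑(List.ofFn lam)) :
    ∃ b : OrthonormalBasis (Fin N) ℝ (EuclideanSpace ℝ (Fin N)),
      ∀ k, toEuclideanLin A (b k) = lam k • b k := by
  set σ := Tuple.sort hA.eigenvalues
  have hperm : (List.ofFn lam).Perm (List.ofFn (hA.eigenvalues ∘ σ)) := by
    rw [← Multiset.coe_eq_coe, ← hroots, hA.roots_charpoly_eq_eigenvalues, Fin.univ_val_map,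
      Multiset.coe_eq_coe]
    exact (Equiv.Perm.ofFn_comp_perm σ hA.eigenvalues).symm
  have hsorted : lam = hA.eigenvalues ∘ σ := List.ofFn_injective <|
    hperm.eq_of_sortedLE hlam.sortedLE_ofFn (Tuple.monotone_sort _).sortedLE_ofFn
  refine ⟨hA.eigenvectorBasis.reindex σ.symm, fun k => ?_⟩
  rw [OrthonormalBasis.reindex_apply, Equiv.symm_symm, hsorted, toLpLin_apply,
    hA.mulVec_eigenvectorBasis]
  rfl

section Rayleigh

variable {E : Type*} [NormedAddCommGroup E] [InnerProductSpace ℝ E] {N : ℕ}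
  {T : E →ₗ[ℝ] E} {μ : Fin N → ℝ} {b : OrthonormalBasis (Fin N) ℝ E}

theorem OrthonormalBasis.inner_apply_self_eq_sum (hb : ∀ k, T (b k) = μ k • b k) (x : E) :
    ⟪T x, x⟫ = ∑ k, μ k * ⟪b k, x⟫ ^ 2 := by
  nth_rw 1 [← b.sum_repr' x]
  simp only [map_sum, map_smul, hb, sum_inner, real_inner_smul_left]
  exact Finset.sum_congr rfl fun k _ => by ring

theorem OrthonormalBasis.inner_apply_self_le (hb : ∀ k, T (b k) = μ k • b k) (hμ : Monotone μ)
    {i : Fin N} {x : E} (hx : ∀ k, i < k → ⟪b k, x⟫ = 0) : ⟪T x, x⟫ ≤ μ i * ‖x‖ ^ 2 := by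
  rw [b.inner_apply_self_eq_sum hb, ← b.sum_sq_inner_right, Finset.mul_sum]
  refine Finset.sum_le_sum fun k _ => ?_
  rcases le_or_gt k i with hki | hik
  · exact mul_le_mul_of_nonneg_right (hμ hki) (sq_nonneg _)
  · simp [hx k hik]

theorem OrthonormalBasis.le_inner_apply_self (hb : ∀ k, T (b k) = μ k • b k) (hμ : Monotone μ)
    {i : Fin N} {x : E} (hx : ∀ k, k < i → ⟪b k, x⟫ = 0) : μ i * ‖x‖ ^ 2 ≤ ⟪T x, x⟫ := by
  rw [b.inner_apply_self_eq_sum hb, ← b.sum_sq_inner_right, Finset.mul_sum]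
  refine Finset.sum_le_sum fun k _ => ?_
  rcases lt_or_ge k i with hki | hik
  · simp [hx k hki]
  · exact mul_le_mul_of_nonneg_right (hμ hik) (sq_nonneg _)

end Rayleigh

theorem Submodule.exists_ne_zero_forall_eq_zero_of_card_lt_finrank {K V ι : Type*} [Field K]
    [AddCommGroup V] [Module K V] [Fintype ι] (U : Submodule K V) [FiniteDimensional K U]
    (f : ι → V →ₗ[K] K) (h : Fintype.card ι < Module.finrank K U) :
    ∃ y ∈ U, y ≠ 0 ∧ ∀ k, f k y = 0 := by
  have hker : LinearMap.ker ((LinearMap.pi f).comp U.subtype) ≠ ⊥ :=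
    LinearMap.ker_ne_bot_of_finrank_lt (by rwa [Module.finrank_fintype_fun_eq_card])
  obtain ⟨y, hy, hy0⟩ := Submodule.exists_mem_ne_zero_of_ne_bot hker
  refine ⟨y, y.2, by simpa using hy0, fun k => ?_⟩
  simpa using congrFun (LinearMap.mem_ker.mp hy) k

section OrthonormalSpan

variable {ι 𝕜 E : Type*} [Fintype ι] [RCLike 𝕜] [NormedAddCommGroup E] [InnerProductSpace 𝕜 E]

theorem OrthonormalBasis.finrank_span_image (b : OrthonormalBasis ι 𝕜 E) (s : Finset ι) :
    Module.finrank 𝕜 (Submodule.span 𝕜 (b '' s)) = s.card := by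
  convert finrank_span_eq_card (b.orthonormal.linearIndependent.comp ((↑) : s → ι)
    Subtype.val_injective) <;> simp [Set.range_comp]

theorem OrthonormalBasis.inner_eq_zero_of_mem_span_image (b : OrthonormalBasis ι 𝕜 E)
    {s : Set ι} {k : ι} (hk : k ∉ s) {y : E} (hy : y ∈ Submodule.span 𝕜 (b '' s)) :
    inner 𝕜 (b k) y = 0 := by
  obtain ⟨l, hl, rfl⟩ := (Finsupp.mem_span_image_iff_linearCombination 𝕜).1 hy
  rw [← inner_conj_symm, b.orthonormal.inner_finsupp_eq_zero hk hl, map_zero]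

end OrthonormalSpan

theorem OrthonormalBasis.eigenvalue_le_add_of_inner_isometry_le {E F : Type*}
    [NormedAddCommGroup E] [InnerProductSpace ℝ E] [NormedAddCommGroup F] [InnerProductSpace ℝ F]
    {M N : ℕ} {T : E →ₗ[ℝ] E} {S : F →ₗ[ℝ] F} {μ : Fin N → ℝ} {ν : Fin M → ℝ}
    {b : OrthonormalBasis (Fin N) ℝ E} {c : OrthonormalBasis (Fin M) ℝ F}
    (hb : ∀ k, T (b k) = μ k • b k) (hμ : Monotone μ)
    (hc : ∀ k, S (c k) = ν k • c k) (hν : Monotone ν)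
    (J : F →ₗᵢ[ℝ] E) {δ : ℝ} (hJ : ∀ y, ⟪T (J y), J y⟫ ≤ ⟪S y, y⟫ + δ * ‖y‖ ^ 2)
    (hMN : M ≤ N) (i : Fin M) : μ (Fin.castLE hMN i) ≤ ν i + δ := by
  have := FiniteDimensional.span_of_finite ℝ ((Finset.Iic i).finite_toSet.image c)
  obtain ⟨y, hyU, hy0, hyb⟩ :=
    (Submodule.span ℝ (c '' Finset.Iic i)).exists_ne_zero_forall_eq_zero_of_card_lt_finrank
      (fun k : Finset.Iio (Fin.castLE hMN i) => (innerₛₗ ℝ (b k)).comp J.toLinearMap)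
      (by rw [Fintype.card_coe, c.finrank_span_image, Fin.card_Iio, Fin.card_Iic]; simp)
  have hyc : ∀ k, i < k → ⟪c k, y⟫ = 0 := fun k hk =>
    c.inner_eq_zero_of_mem_span_image (by simpa using hk) hyU
  have hJyb : ∀ k, k < Fin.castLE hMN i → ⟪b k, J y⟫ = 0 := fun k hk =>
    hyb ⟨k, Finset.mem_Iio.mpr hk⟩
  refine le_of_mul_le_mul_right ?_ (by positivity : 0 < ‖y‖ ^ 2)
  calc μ (Fin.castLE hMN i) * ‖y‖ ^ 2 = μ (Fin.castLE hMN i) * ‖J y‖ ^ 2 := by rw [J.norm_map]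
    _ ≤ ⟪T (J y), J y⟫ := b.le_inner_apply_self hb hμ hJyb
    _ ≤ ⟪S y, y⟫ + δ * ‖y‖ ^ 2 := hJ y
    _ ≤ (ν i + δ) * ‖y‖ ^ 2 := by linarith [c.inner_apply_self_le hc hν hyc]

namespace EuclideanSpace

variable {𝕜 : Type*} [RCLike 𝕜] {n : ℕ}

noncomputable def extendByZero (v : Fin (n + 1)) :
    EuclideanSpace 𝕜 (Fin n) →ₗᵢ[𝕜] EuclideanSpace 𝕜 (Fin (n + 1)) where
  toLinearMap := (WithLp.linearEquiv 2 𝕜 _).symm.toLinearMap ∘ₗ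
    Function.ExtendByZero.linearMap 𝕜 v.succAbove ∘ₗ (WithLp.linearEquiv 2 𝕜 _).toLinearMap
  norm_map' y := by
    simp [EuclideanSpace.norm_eq, Fin.sum_univ_succAbove _ v,
      Fin.succAbove_right_injective.extend_apply]

variable (v : Fin (n + 1)) (y : EuclideanSpace 𝕜 (Fin n))

@[simp]
theorem extendByZero_apply_self : extendByZero v y v = 0 := by
  simp [extendByZero]

@[simp]
theorem extendByZero_apply_succAbove (a : Fin n) : extendByZero v y (v.succAbove a) = y a := by
  simp [extendByZero, Fin.succAbove_right_injective.extend_apply]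

theorem inner_toEuclideanLin_extendByZero (A : Matrix (Fin (n + 1)) (Fin (n + 1)) 𝕜) :
    inner 𝕜 (toEuclideanLin A (extendByZero v y)) (extendByZero v y) =
      inner 𝕜 (toEuclideanLin (A.submatrix v.succAbove v.succAbove) y) y := by
  simp [PiLp.inner_apply, Fin.sum_univ_succAbove _ v, toLpLin_apply, mulVec, dotProduct]

end EuclideanSpace

theorem Matrix.inner_toEuclideanLin_diagonal_le {ι : Type*} [Fintype ι] [DecidableEq ι]
    {d : ι → ℝ} {δ : ℝ} (hd : ∀ a, d a ≤ δ) (y : EuclideanSpace ℝ ι) :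
    ⟪toEuclideanLin (diagonal d) y, y⟫ ≤ δ * ‖y‖ ^ 2 := by
  simp only [PiLp.inner_apply, toLpLin_apply, mulVec_diagonal, EuclideanSpace.real_norm_sq_eq,
    Finset.mul_sum, RCLike.inner_apply, conj_trivial]
  exact Finset.sum_le_sum fun a _ => by nlinarith [hd a, sq_nonneg (y a)]

namespace Matrix

variable {ι R : Type*} [Fintype ι] [DecidableEq ι] [AddCommGroup R]

def laplacian (W : Matrix ι ι R) : Matrix ι ι R :=
  diagonal (fun i => ∑ j, W i j) - W

theorem IsSymm.laplacian {W : Matrix ι ι R} (hW : W.IsSymm) : W.laplacian.IsSymm :=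
  (isSymm_diagonal _).sub hW

theorem laplacian_submatrix_succAbove {n : ℕ} (W : Matrix (Fin (n + 1)) (Fin (n + 1)) R)
    (v : Fin (n + 1)) :
    W.laplacian.submatrix v.succAbove v.succAbove =
      (W.submatrix v.succAbove v.succAbove).laplacian +
        diagonal (fun a => W (v.succAbove a) v) := by
  ext a b
  rcases eq_or_ne a b with rfl | hab
  · simp only [laplacian, Fin.sum_univ_succAbove _ v, submatrix_apply, sub_apply,
      diagonal_apply_eq, add_apply]
    abel
  · simp [laplacian, diagonal_apply_ne _ hab, Fin.succAbove_right_injective.ne hab]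

end Matrix

theorem laplacian_vertex_deletion_eigenvalue_bound_general (n : ℕ)
    (W : Matrix (Fin (n + 1)) (Fin (n + 1)) ℝ) (hWsymm : W.IsSymm)
    (L : Matrix (Fin (n + 1)) (Fin (n + 1)) ℝ)
    (hL : L = Matrix.diagonal (fun i => ∑ j, W i j) - W)
    (v : Fin (n + 1)) (δ : ℝ) (hWv : ∀ j, W j v ≤ δ)
    (Wv : Matrix (Fin n) (Fin n) ℝ) (hWvdef : Wv = W.submatrix v.succAbove v.succAbove)
    (Lv : Matrix (Fin n) (Fin n) ℝ)
    (hLv : Lv = Matrix.diagonal (fun i => ∑ j, Wv i j) - Wv)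
    (lam : Fin (n + 1) → ℝ) (lamv : Fin n → ℝ)
    (hlam_mono : Monotone lam) (hlamv_mono : Monotone lamv)
    (hlam : L.charpoly.roots = ↑(List.ofFn lam))
    (hlamv : Lv.charpoly.roots = ↑(List.ofFn lamv)) :
    ∀ i : Fin n, lam i.castSucc - δ ≤ lamv i := by
  intro i
  obtain rfl : L = W.laplacian := hL
  obtain rfl : Lv = Wv.laplacian := hLv
  have hLherm : W.laplacian.IsHermitian := isHermitian_iff_isSymm.2 hWsymm.laplacian
  have hLvherm : Wv.laplacian.IsHermitian :=
    isHermitian_iff_isSymm.2 (hWvdef ▸ hWsymm.submatrix _).laplacian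
  obtain ⟨b, hb⟩ := hLherm.exists_orthonormalBasis_toEuclideanLin_eq_smul hlam_mono hlam
  obtain ⟨c, hc⟩ := hLvherm.exists_orthonormalBasis_toEuclideanLin_eq_smul hlamv_mono hlamv
  have hcompress : ∀ y, ⟪toEuclideanLin W.laplacian (EuclideanSpace.extendByZero v y),
      EuclideanSpace.extendByZero v y⟫ ≤ ⟪toEuclideanLin Wv.laplacian y, y⟫ + δ * ‖y‖ ^ 2 :=
    fun y => by
      rw [EuclideanSpace.inner_toEuclideanLin_extendByZero, laplacian_submatrix_succAbove,
        ← hWvdef, map_add, LinearMap.add_apply, inner_add_left]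
      exact add_le_add_right (inner_toEuclideanLin_diagonal_le (fun a => hWv _) y) _
  exact sub_le_iff_le_add.2 <| b.eigenvalue_le_add_of_inner_isometry_le hb hlam_mono hc
    hlamv_mono (EuclideanSpace.extendByZero v) hcompress n.le_succ i

/-- Vertex deletion eigenvalue bound for weighted graphs: let `L` be the Laplacian of an
undirected weighted graph `G` on `n+1` vertices (with symmetric nonnegative weight matrix
`W`), with eigenvalues `λ₁ ≤ ... ≤ λ_{n+1}`.  Let `v` be a vertex all of whose incident
edge weights are at most `δ`, and let `Lv` be the Laplacian of the graph obtained by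
deleting `v`, with eigenvalues `λᵛ₁ ≤ ... ≤ λᵛ_n`.  Then `λ_i - δ ≤ λᵛ_i` for all `i`. -/
theorem laplacian_vertex_deletion_eigenvalue_bound (n : ℕ)
    (W : Matrix (Fin (n + 1)) (Fin (n + 1)) ℝ) (hWsymm : W.IsSymm)
    (hWnonneg : ∀ i j, 0 ≤ W i j)
    (L : Matrix (Fin (n + 1)) (Fin (n + 1)) ℝ)
    (hL : L = Matrix.diagonal (fun i => ∑ j, W i j) - W)
    (v : Fin (n + 1)) (δ : ℝ) (hδ : 0 ≤ δ) (hWv : ∀ j, W j v ≤ δ)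
    (Wv : Matrix (Fin n) (Fin n) ℝ) (hWvdef : Wv = W.submatrix v.succAbove v.succAbove)
    (Lv : Matrix (Fin n) (Fin n) ℝ)
    (hLv : Lv = Matrix.diagonal (fun i => ∑ j, Wv i j) - Wv)
    (lam : Fin (n + 1) → ℝ) (lamv : Fin n → ℝ)
    (hlam_mono : Monotone lam) (hlamv_mono : Monotone lamv)
    (hlam : L.charpoly.roots = ↑(List.ofFn lam))
    (hlamv : Lv.charpoly.roots = ↑(List.ofFn lamv)) :
    ∀ i : Fin n, lam i.castSucc - δ ≤ lamv i :=
  laplacian_vertex_deletion_eigenvalue_bound_general n W hWsymm L hL v δ hWv Wv hWvdef Lv hLv lam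
    lamv hlam_mono hlamv_mono hlam hlamv
end

section
/- Local sensitivity bound for closeness centrality: let G = (V,E,W) and G' = (V,E,W') be θ-edge-neighbouring connected weighted graphs on n vertices, with w = Σ_{e∈E} W(e) > θ. Then Σ_{u∈V} |1/S_G(u) - 1/S_{G'}(u)| ≤ n(n-1)θ / (w(w - θ)), where S_G(u) = Σ_{v∈V} d_G(u,v), provided S_G(u) ≥ w and S_{G'}(u) ≥ w - θ for all u. -/
/-- The cost of a walk (list of vertices) under a weight function `W`. -/
def walkCost {V : Type*} (W : V → V → ℝ) : List V → ℝ
  | a :: b :: l => W a b + walkCost W (b :: l)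
  | _ => 0

/-- `p` is a (simple) path from `u` to `v` in the graph with edge relation `E`. -/
def IsPathIn {V : Type*} (E : V → V → Prop) (u v : V) (p : List V) : Prop :=
  p.Chain' E ∧ p.head? = some u ∧ p.getLast? = some v ∧ p.Nodup

/-- The weighted shortest-path distance between `u` and `v`. -/
noncomputable def spDist {V : Type*} (E : V → V → Prop) (W : V → V → ℝ) (u v : V) : ℝ :=
  sInf {c | ∃ p : List V, IsPathIn E u v p ∧ walkCost W p = c}

/-!
Changing the weight of one edge by at most `θ` changes the cost of every simple path by at most
`θ`, since a simple path uses that edge at most once. Over a finite vertex set the distance is a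
minimum over finitely many simple paths, so every distance moves by at most `θ`, and the sum
`S(u)` by at most `(n - 1) θ` because `d(u, u) = 0`. Finally
`|1/S - 1/S'| = |S - S'| / (S S') ≤ (n - 1) θ / (w (w - θ))`; summing over `u` gives the bound.
-/

open Finset

lemma csInf_image_le_csInf_image_add {ι : Type*} {s : Set ι} (hs : s.Finite) {f g : ι → ℝ}
    {θ : ℝ} (hθ : 0 ≤ θ) (hfg : ∀ i ∈ s, f i ≤ g i + θ) :
    sInf (f '' s) ≤ sInf (g '' s) + θ := by
  rcases s.eq_empty_or_nonempty with rfl | hne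
  · simpa using hθ
  obtain ⟨j, hj, hgj⟩ := (hne.image g).csInf_mem (hs.image g)
  calc sInf (f '' s) ≤ f j := csInf_le (hs.image f).bddBelow (Set.mem_image_of_mem f hj)
    _ ≤ sInf (g '' s) + θ := hgj ▸ hfg j hj

lemma abs_csInf_image_sub_csInf_image_le {ι : Type*} {s : Set ι} (hs : s.Finite) {f g : ι → ℝ}
    {θ : ℝ} (hθ : 0 ≤ θ) (hfg : ∀ i ∈ s, |f i - g i| ≤ θ) :
    |sInf (f '' s) - sInf (g '' s)| ≤ θ := by
  have h₁ := csInf_image_le_csInf_image_add (f := f) (g := g) hs hθ fun i hi => by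
    linarith [(abs_le.mp (hfg i hi)).2]
  have h₂ := csInf_image_le_csInf_image_add (f := g) (g := f) hs hθ fun i hi => by
    linarith [(abs_le.mp (hfg i hi)).1]
  exact abs_sub_le_iff.mpr ⟨by linarith, by linarith⟩

lemma abs_sum_sub_sum_le_card_sub_one_mul {ι : Type*} [Fintype ι] {f g : ι → ℝ} {θ : ℝ}
    (u : ι) (hu : f u = g u) (hfg : ∀ v, |f v - g v| ≤ θ) :
    |∑ v, f v - ∑ v, g v| ≤ (Fintype.card ι - 1) * θ := by
  classical
  rw [← sum_sub_distrib, ← sum_erase univ (a := u) (sub_eq_zero.mpr hu)]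
  calc |∑ v ∈ univ.erase u, (f v - g v)| ≤ ∑ v ∈ univ.erase u, |f v - g v| :=
        abs_sum_le_sum_abs _ _
    _ ≤ ∑ _v ∈ univ.erase u, θ := sum_le_sum fun v _ => hfg v
    _ = (Fintype.card ι - 1) * θ := by
        rw [sum_const, card_erase_of_mem (mem_univ u), card_univ, nsmul_eq_mul,
          Nat.cast_pred (Fintype.card_pos_iff.mpr ⟨u⟩)]

lemma abs_one_div_sub_one_div_le {S S' w w' δ : ℝ} (hw : 0 < w) (hw' : 0 < w')
    (hS : w ≤ S) (hS' : w' ≤ S') (hδ : |S - S'| ≤ δ) :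
    |1 / S - 1 / S'| ≤ δ / (w * w') := by
  have hSpos : 0 < S := hw.trans_le hS
  have hS'pos : 0 < S' := hw'.trans_le hS'
  have hsub : 1 / S - 1 / S' = (S' - S) / (S * S') := by field_simp
  rw [hsub, abs_div, abs_of_pos (mul_pos hSpos hS'pos), abs_sub_comm]
  exact div_le_div₀ ((abs_nonneg _).trans hδ) hδ (mul_pos hw hw')
    (mul_le_mul hS hS' hw'.le hSpos.le)

section Perturbation

variable {V : Type*} {W W' : V → V → ℝ} {θ : ℝ} {a b : V}

lemma walkCost_eq_of_not_mem
    (hagree : ∀ x y, ¬((x = a ∧ y = b) ∨ (x = b ∧ y = a)) → W x y = W' x y) :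
    ∀ p : List V, (a ∉ p ∨ b ∉ p) → walkCost W p = walkCost W' p
  | [], _ => rfl
  | [_], _ => rfl
  | x :: y :: l, h => by
      have hxy : W x y = W' x y := hagree x y <| by
        rintro (⟨rfl, rfl⟩ | ⟨rfl, rfl⟩) <;> simp at h
      have htail : walkCost W (y :: l) = walkCost W' (y :: l) :=
        walkCost_eq_of_not_mem hagree (y :: l) <| h.imp (mt (List.mem_cons_of_mem _))
          (mt (List.mem_cons_of_mem _))
      simp only [walkCost, hxy, htail]

lemma abs_sub_le_of_perturbed
    (hWsymm : ∀ x y, W x y = W y x) (hW'symm : ∀ x y, W' x y = W' y x)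
    (hagree : ∀ x y, ¬((x = a ∧ y = b) ∨ (x = b ∧ y = a)) → W x y = W' x y)
    (hdiff : |W a b - W' a b| ≤ θ) (x y : V) :
    |W x y - W' x y| ≤ θ := by
  by_cases hxy : (x = a ∧ y = b) ∨ (x = b ∧ y = a)
  · rcases hxy with ⟨rfl, rfl⟩ | ⟨rfl, rfl⟩
    · exact hdiff
    · rwa [hWsymm, hW'symm]
  · simpa [hagree x y hxy] using (abs_nonneg _).trans hdiff

lemma abs_walkCost_sub_le
    (hWsymm : ∀ x y, W x y = W y x) (hW'symm : ∀ x y, W' x y = W' y x)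
    (hagree : ∀ x y, ¬((x = a ∧ y = b) ∨ (x = b ∧ y = a)) → W x y = W' x y)
    (hdiff : |W a b - W' a b| ≤ θ) :
    ∀ p : List V, p.Nodup → |walkCost W p - walkCost W' p| ≤ θ
  | [], _ | [_], _ => by simpa [walkCost] using (abs_nonneg _).trans hdiff
  | x :: y :: l, h => by
      rw [List.nodup_cons] at h
      simp only [walkCost]
      by_cases hxy : (x = a ∧ y = b) ∨ (x = b ∧ y = a)
      · have htail : walkCost W (y :: l) = walkCost W' (y :: l) := by
          refine walkCost_eq_of_not_mem hagree (y :: l) ?_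
          rcases hxy with ⟨rfl, _⟩ | ⟨rfl, _⟩
          exacts [Or.inl h.1, Or.inr h.1]
        rw [htail, add_sub_add_right_eq_sub]
        exact abs_sub_le_of_perturbed hWsymm hW'symm hagree hdiff x y
      · rw [hagree x y hxy, add_sub_add_left_eq_sub]
        exact abs_walkCost_sub_le hWsymm hW'symm hagree hdiff (y :: l) h.2

end Perturbation

section Distance

variable {V : Type*} {E : V → V → Prop}

lemma IsPathIn.eq_singleton {u : V} {p : List V} (hp : IsPathIn E u u p) : p = [u] := by
  obtain ⟨-, hhead, hlast, hnodup⟩ := hp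
  match p, hhead, hlast, hnodup with
  | [x], hhead, _, _ => simpa using hhead
  | x :: y :: l, hhead, hlast, hnodup =>
    obtain rfl : x = u := by simpa using hhead
    rw [List.getLast?_cons_cons] at hlast
    exact absurd (List.mem_of_mem_getLast? hlast) (List.nodup_cons.mp hnodup).1

lemma spDist_self (W : V → V → ℝ) (u : V) : spDist E W u u = 0 := by
  have hpaths : {c | ∃ p : List V, IsPathIn E u u p ∧ walkCost W p = c} = {0} := by
    ext c
    constructor
    · rintro ⟨p, hp, rfl⟩
      rw [hp.eq_singleton]
      rfl
    · rintro rfl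
      exact ⟨[u], ⟨List.isChain_singleton u, rfl, rfl, List.nodup_singleton u⟩, rfl⟩
  rw [spDist, hpaths, csInf_singleton]

lemma abs_spDist_sub_le [Finite V] {W W' : V → V → ℝ} {θ : ℝ} (hθ : 0 ≤ θ)
    (hcost : ∀ p : List V, p.Nodup → |walkCost W p - walkCost W' p| ≤ θ) (u v : V) :
    |spDist E W u v - spDist E W' u v| ≤ θ := by
  have : Fintype V := Fintype.ofFinite V
  have hfin : {p : List V | IsPathIn E u v p}.Finite :=
    (Set.finite_coe_iff.mp (Finite.of_fintype {l : List V // l.Nodup})).subset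
      fun p hp => hp.2.2.2
  exact abs_csInf_image_sub_csInf_image_le hfin hθ fun p hp => hcost p hp.2.2.2

end Distance

theorem closeness_local_sensitivity_bound_general {V : Type*} [Fintype V]
    (E : V → V → Prop) (W W' : V → V → ℝ) (θ : ℝ)
    (hWsymm : ∀ x y, W x y = W y x) (hW'symm : ∀ x y, W' x y = W' y x)
    (a b : V)
    (hagree : ∀ x y, ¬((x = a ∧ y = b) ∨ (x = b ∧ y = a)) → W x y = W' x y)
    (hdiff : |W a b - W' a b| ≤ θ)
    (w : ℝ) (hwθ : θ < w)
    (hSG : ∀ u : V, w ≤ ∑ v, spDist E W u v)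
    (hSG' : ∀ u : V, w - θ ≤ ∑ v, spDist E W' u v) :
    ∑ u : V, |1 / (∑ v, spDist E W u v) - 1 / (∑ v, spDist E W' u v)|
      ≤ (Fintype.card V) * (Fintype.card V - 1) * θ / (w * (w - θ)) := by
  have hθ : 0 ≤ θ := (abs_nonneg _).trans hdiff
  have hdist : ∀ u v, |spDist E W u v - spDist E W' u v| ≤ θ :=
    abs_spDist_sub_le hθ (abs_walkCost_sub_le hWsymm hW'symm hagree hdiff)
  have hvertex : ∀ u, |1 / (∑ v, spDist E W u v) - 1 / (∑ v, spDist E W' u v)|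
      ≤ (Fintype.card V - 1) * θ / (w * (w - θ)) := fun u =>
    abs_one_div_sub_one_div_le (by linarith) (by linarith) (hSG u) (hSG' u)
      (abs_sum_sub_sum_le_card_sub_one_mul u (by rw [spDist_self, spDist_self]) (hdist u))
  calc ∑ u : V, |1 / (∑ v, spDist E W u v) - 1 / (∑ v, spDist E W' u v)|
      ≤ ∑ _u : V, (Fintype.card V - 1) * θ / (w * (w - θ)) := sum_le_sum fun u _ => hvertex u
    _ = (Fintype.card V) * (Fintype.card V - 1) * θ / (w * (w - θ)) := by
        rw [sum_const, card_univ, nsmul_eq_mul]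
        ring

/-- Local sensitivity bound for closeness centrality: if `G = (V,E,W)` and `G' = (V,E,W')`
are `θ`-edge-neighbouring connected weighted graphs on `n` vertices, `w` is the total edge
weight of `G` with `w > θ`, and `S_G(u) = Σ_v d_G(u,v)` satisfies `S_G(u) ≥ w` and
`S_{G'}(u) ≥ w - θ` for all `u`, then
`Σ_u |1/S_G(u) - 1/S_{G'}(u)| ≤ n(n-1)θ / (w(w-θ))`. -/
theorem closeness_local_sensitivity_bound {V : Type*} [Fintype V]
    (E : V → V → Prop) (W W' : V → V → ℝ) (θ : ℝ) (hθ : 0 < θ)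
    (hEsymm : ∀ x y, E x y → E y x)
    (hWsymm : ∀ x y, W x y = W y x) (hW'symm : ∀ x y, W' x y = W' y x)
    (hWpos : ∀ x y, E x y → 0 < W x y) (hW'pos : ∀ x y, E x y → 0 < W' x y)
    (a b : V) (hab : E a b)
    (hagree : ∀ x y, ¬((x = a ∧ y = b) ∨ (x = b ∧ y = a)) → W x y = W' x y)
    (hne : W a b ≠ W' a b) (hdiff : |W a b - W' a b| ≤ θ)
    (hconn : ∀ u v : V, ∃ p : List V, IsPathIn E u v p)
    (w : ℝ) (hw : w = (∑ x, ∑ y, W x y) / 2) (hwθ : θ < w)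
    (hSG : ∀ u : V, w ≤ ∑ v, spDist E W u v)
    (hSG' : ∀ u : V, w - θ ≤ ∑ v, spDist E W' u v) :
    ∑ u : V, |1 / (∑ v, spDist E W u v) - 1 / (∑ v, spDist E W' u v)|
      ≤ (Fintype.card V) * (Fintype.card V - 1) * θ / (w * (w - θ)) :=
  closeness_local_sensitivity_bound_general E W W' θ hWsymm hW'symm a b hagree hdiff w hwθ hSG hSG'
end

section
/- Davis–Kahan consequence for top eigenvectors: let A and A' = A + P be n×n real symmetric matrices with eigenvalues λ₁ ≤ ... ≤ λ_n of A, and suppose the spectral gap g = λ_n - λ_{n-1} > 0. Let v and v' be unit top eigenvectors of A and A' respectively, with ⟨v, v'⟩ ≥ 0. Then ‖v - v'‖₂ ≤ 2√2·‖P‖/g, where ‖P‖ is the spectral norm. -/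
/-!
Expand `v'` in an orthonormal eigenbasis `(bᵢ)` of `A`. As the top eigenvalue `λ₁` of `A` is
simple, `v = ±b₀`, so `sin² θ = 1 - ⟪v, v'⟫²` is the mass of `v'` on the other eigenvectors, whose
eigenvalues are `≤ λ₂`. Testing `A + P` on `b₀` gives `μ ≥ λ₁ - p` for its top eigenvalue `μ`; if
`2p < g` every eigenvalue of `A` other than `λ₁` is then at distance `≥ g / 2` from `μ`, so
`(g / 2)² sin² θ ≤ ‖(A - μ) v'‖² = ‖P v'‖² ≤ p²`. Finally `‖v - v'‖² = 2 - 2 cos θ ≤ 2 sin² θ`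
because `cos θ ≥ 0`; if `2p ≥ g` the bound `2√2 p / g ≥ √2` holds trivially.
-/

open Finset
open scoped RealInnerProductSpace

theorem norm_sub_sq_le_two_mul_one_sub_inner_sq {E : Type*} [NormedAddCommGroup E]
    [InnerProductSpace ℝ E] {u w : E} (hu : ‖u‖ = 1) (hw : ‖w‖ = 1)
    (hinner : 0 ≤ ⟪u, w⟫) : ‖u - w‖ ^ 2 ≤ 2 * (1 - ⟪u, w⟫ ^ 2) := by
  have hle : ⟪u, w⟫ ≤ 1 := by simpa [hu, hw] using real_inner_le_norm u w
  rw [norm_sub_sq_real, hu, hw]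
  nlinarith

namespace LinearMap.IsSymmetric

section Eigenbasis

variable {ι E : Type*} [Fintype ι] [NormedAddCommGroup E] [InnerProductSpace ℝ E]
  {T : E →ₗ[ℝ] E} {b : OrthonormalBasis ι ℝ E} {d : ι → ℝ}

theorem inner_basis_apply (hT : T.IsSymmetric) (hb : ∀ i, T (b i) = d i • b i) (i : ι)
    (x : E) : ⟪b i, T x⟫ = d i * ⟪b i, x⟫ := by
  rw [← hT, hb, real_inner_smul_left]

theorem inner_apply_self_le (hT : T.IsSymmetric) (hb : ∀ i, T (b i) = d i • b i) {M : ℝ}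
    (hM : ∀ i, d i ≤ M) (x : E) : ⟪T x, x⟫ ≤ M * ‖x‖ ^ 2 :=
  calc ⟪T x, x⟫ = ∑ i, d i * ⟪b i, x⟫ ^ 2 := by
        rw [real_inner_comm, ← b.sum_inner_mul_inner]
        refine sum_congr rfl fun i _ => ?_
        rw [hT.inner_basis_apply hb, real_inner_comm]; ring
    _ ≤ ∑ i, M * ⟪b i, x⟫ ^ 2 := by gcongr with i; exact hM i
    _ = M * ‖x‖ ^ 2 := by rw [← mul_sum, b.sum_sq_inner_right]

theorem inner_basis_eq_zero_of_apply_eq_smul (hT : T.IsSymmetric)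
    (hb : ∀ i, T (b i) = d i • b i) {v : E} {μ : ℝ} (hv : T v = μ • v) {i : ι}
    (hi : d i ≠ μ) : ⟪b i, v⟫ = 0 := by
  have h := hT.inner_basis_apply hb i v
  rw [hv, real_inner_smul_right] at h
  exact (mul_eq_zero.mp (by linear_combination -h : (d i - μ) * ⟪b i, v⟫ = 0)).resolve_left
    (sub_ne_zero.mpr hi)

theorem inner_sq_eq_of_apply_eq_smul (hT : T.IsSymmetric) (hb : ∀ i, T (b i) = d i • b i)
    {v : E} {i₀ : ι} (hv : T v = d i₀ • v) (hsimple : ∀ i ≠ i₀, d i ≠ d i₀) (x : E) :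
    ⟪v, x⟫ ^ 2 = ‖v‖ ^ 2 * ⟪b i₀, x⟫ ^ 2 := by
  have hzero : ∀ i ≠ i₀, ⟪b i, v⟫ = 0 := fun i hi =>
    hT.inner_basis_eq_zero_of_apply_eq_smul hb hv (hsimple i hi)
  have hinner : ⟪v, x⟫ = ⟪b i₀, v⟫ * ⟪b i₀, x⟫ := by
    rw [← b.sum_inner_mul_inner, sum_eq_single i₀ (fun i _ hi => by
      rw [real_inner_comm, hzero i hi, zero_mul]) (by simp), real_inner_comm]
  have hnorm : ‖v‖ ^ 2 = ⟪b i₀, v⟫ ^ 2 := by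
    rw [← b.sum_sq_inner_right, sum_eq_single i₀ (fun i _ hi => by
      rw [hzero i hi, sq, zero_mul]) (by simp)]
  rw [hinner, hnorm]; ring

theorem sq_mul_sub_le_norm_apply_sub_smul_sq (hT : T.IsSymmetric)
    (hb : ∀ i, T (b i) = d i • b i) {μ δ : ℝ} (hδ : 0 ≤ δ) {i₀ : ι}
    (hgap : ∀ i ≠ i₀, δ ≤ |d i - μ|) (x : E) :
    δ ^ 2 * (‖x‖ ^ 2 - ⟪b i₀, x⟫ ^ 2) ≤ ‖T x - μ • x‖ ^ 2 := by
  classical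
  have hcoord : ∀ i, ⟪b i, T x - μ • x⟫ = (d i - μ) * ⟪b i, x⟫ := fun i => by
    rw [inner_sub_right, real_inner_smul_right, hT.inner_basis_apply hb]; ring
  calc δ ^ 2 * (‖x‖ ^ 2 - ⟪b i₀, x⟫ ^ 2) = ∑ i ∈ univ.erase i₀, δ ^ 2 * ⟪b i, x⟫ ^ 2 := by
        rw [← mul_sum, ← b.sum_sq_inner_right, ← add_sum_erase _ _ (mem_univ i₀)]; ring
    _ ≤ ∑ i ∈ univ.erase i₀, ((d i - μ) * ⟪b i, x⟫) ^ 2 := by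
        gcongr with i hi
        rw [mul_pow, ← sq_abs (d i - μ)]
        gcongr
        exact hgap i (ne_of_mem_erase hi)
    _ ≤ ∑ i, ((d i - μ) * ⟪b i, x⟫) ^ 2 :=
        sum_le_sum_of_subset_of_nonneg (erase_subset _ _) fun _ _ _ => sq_nonneg _
    _ = ‖T x - μ • x‖ ^ 2 := by simp_rw [← hcoord, b.sum_sq_inner_right]

end Eigenbasis

variable {E : Type*} [NormedAddCommGroup E] [InnerProductSpace ℝ E] [FiniteDimensional ℝ E]
  {A P : E →ₗ[ℝ] E} {n : ℕ}

theorem apply_eigenvectorBasis_real (hA : A.IsSymmetric) (hn : Module.finrank ℝ E = n)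
    (i : Fin n) :
    A (hA.eigenvectorBasis hn i) = hA.eigenvalues hn i • hA.eigenvectorBasis hn i :=
  hA.apply_eigenvectorBasis hn i

theorem eigenvalues_eq_comp_rev (hA : A.IsSymmetric) (hn : Module.finrank ℝ E = n)
    {lam : Fin n → ℝ} (hmono : Monotone lam) (hroots : A.charpoly.roots = ↑(List.ofFn lam)) :
    hA.eigenvalues hn = lam ∘ Fin.rev := by
  have hperm : (↑(List.ofFn lam) : Multiset ℝ) = ↑(List.ofFn (lam ∘ Fin.rev)) := by
    have hrev : (univ.val.map Fin.rev : Multiset (Fin n)) = univ.val :=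
      Multiset.map_univ_val_equiv Fin.revPerm
    rw [← Fin.univ_val_map, ← Fin.univ_val_map, ← Multiset.map_map, hrev]
  rw [← List.ofFn_inj, ← hA.sort_roots_charpoly_eq_eigenvalues hn, hroots,
    Multiset.map_congr rfl fun x _ => RCLike.re_to_real, Multiset.map_id', hperm,
    Multiset.coe_sort]
  apply List.mergeSort_of_pairwise
  simp_rw [decide_eq_true_eq, ← List.sortedGE_iff_pairwise]
  exact (hmono.comp_antitone Fin.rev_anti).sortedGE_ofFn

theorem eigenvalues_zero_le_add (hA : A.IsSymmetric) (hAP : (A + P).IsSymmetric)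
    (hn : Module.finrank ℝ E = n + 1) {p : ℝ} (hP : ∀ x, ‖P x‖ ≤ p * ‖x‖) :
    hA.eigenvalues hn 0 ≤ hAP.eigenvalues hn 0 + p := by
  set u := hA.eigenvectorBasis hn 0
  have hu : ‖u‖ = 1 := (hA.eigenvectorBasis hn).norm_eq_one 0
  have hrayleigh : ⟪(A + P) u, u⟫ ≤ hAP.eigenvalues hn 0 := by
    simpa [hu] using hAP.inner_apply_self_le (hAP.apply_eigenvectorBasis_real hn)
      (fun i => hAP.eigenvalues_antitone hn (Fin.zero_le i)) u
  have hAu : ⟪A u, u⟫ = hA.eigenvalues hn 0 := by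
    rw [hA.apply_eigenvectorBasis_real hn, real_inner_smul_left, real_inner_self_eq_norm_sq, hu]
    ring
  have hPu : -p ≤ ⟪P u, u⟫ := by
    have := (abs_real_inner_le_norm (P u) u).trans (by simpa [hu] using hP u)
    exact neg_le_of_abs_le this
  rw [LinearMap.add_apply, inner_add_left, hAu] at hrayleigh
  linarith

theorem norm_sub_le_of_apply_eq_eigenvalues_zero (hA : A.IsSymmetric)
    (hAP : (A + P).IsSymmetric) (hn : Module.finrank ℝ E = n + 2) {p : ℝ}
    (hP : ∀ x, ‖P x‖ ≤ p * ‖x‖)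
    (hgap : hA.eigenvalues hn 1 < hA.eigenvalues hn 0) {v v' : E} (hv1 : ‖v‖ = 1)
    (hv'1 : ‖v'‖ = 1) (hv : A v = hA.eigenvalues hn 0 • v)
    (hv' : (A + P) v' = hAP.eigenvalues hn 0 • v') (hinner : 0 ≤ ⟪v, v'⟫) :
    ‖v - v'‖ ≤ 2 * √2 * p / (hA.eigenvalues hn 0 - hA.eigenvalues hn 1) := by
  set l₁ := hA.eigenvalues hn 0
  set l₂ := hA.eigenvalues hn 1
  set μ := hAP.eigenvalues hn 0
  set c := ⟪v, v'⟫
  have hg : 0 < l₁ - l₂ := sub_pos.mpr hgap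
  have hp : 0 ≤ p := (norm_nonneg _).trans (by simpa [hv1] using hP v)
  have hdist : ‖v - v'‖ ^ 2 ≤ 2 * (1 - c ^ 2) :=
    norm_sub_sq_le_two_mul_one_sub_inner_sq hv1 hv'1 hinner
  have hsin : (l₁ - l₂) ^ 2 * (1 - c ^ 2) ≤ 4 * p ^ 2 := by
    rcases le_or_gt (l₁ - l₂) (2 * p) with hlarge | hsmall
    · nlinarith [sq_nonneg c]
    have hμ : l₁ - l₂ ≤ 2 * (μ - l₂) := by
      linarith [hA.eigenvalues_zero_le_add hAP hn hP]
    have hres : (μ - l₂) ^ 2 * (1 - c ^ 2) ≤ p ^ 2 :=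
      calc (μ - l₂) ^ 2 * (1 - c ^ 2)
          = (μ - l₂) ^ 2 * (‖v'‖ ^ 2 - ⟪hA.eigenvectorBasis hn 0, v'⟫ ^ 2) := by
            rw [hA.inner_sq_eq_of_apply_eq_smul (hA.apply_eigenvectorBasis_real hn) hv
              (fun i hi =>
                ((hA.eigenvalues_antitone hn (Fin.one_le_of_ne_zero hi)).trans_lt hgap).ne) v',
              hv1, hv'1, one_pow, one_mul]
        _ ≤ ‖A v' - μ • v'‖ ^ 2 := by
            refine hA.sq_mul_sub_le_norm_apply_sub_smul_sq (hA.apply_eigenvectorBasis_real hn)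
              (by linarith) (fun i hi => ?_) v'
            have := hA.eigenvalues_antitone hn (Fin.one_le_of_ne_zero hi)
            linarith [neg_le_abs (hA.eigenvalues hn i - μ)]
        _ = ‖P v'‖ ^ 2 := by rw [← hv', LinearMap.add_apply, sub_add_cancel_left, norm_neg]
        _ ≤ p ^ 2 := by gcongr; simpa [hv'1] using hP v'
    calc (l₁ - l₂) ^ 2 * (1 - c ^ 2) ≤ (2 * (μ - l₂)) ^ 2 * (1 - c ^ 2) := by
          gcongr
          nlinarith [sq_nonneg ‖v - v'‖]
      _ ≤ 4 * p ^ 2 := by nlinarith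
  rw [le_div_iff₀ hg]
  refine le_of_sq_le_sq ?_ (by positivity)
  rw [mul_pow, mul_pow, mul_pow, Real.sq_sqrt zero_le_two]
  nlinarith

end LinearMap.IsSymmetric

theorem Matrix.charpoly_toEuclideanLin {ι : Type*} [Fintype ι] [DecidableEq ι]
    (M : Matrix ι ι ℝ) : (Matrix.toEuclideanLin M).charpoly = M.charpoly := by
  rw [Matrix.toEuclideanLin_eq_toLin_orthonormal, Matrix.charpoly_toLin]

theorem EuclideanSpace.norm_toLp_real {ι : Type*} [Fintype ι] (x : ι → ℝ) :
    ‖WithLp.toLp 2 x‖ = √(∑ k, x k ^ 2) := by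
  simp [EuclideanSpace.norm_eq]

theorem EuclideanSpace.inner_toLp_real {ι : Type*} [Fintype ι] (x y : ι → ℝ) :
    ⟪WithLp.toLp 2 x, WithLp.toLp 2 y⟫ = ∑ k, x k * y k := by
  simp [PiLp.inner_apply, mul_comm]

/-- Davis–Kahan consequence for top eigenvectors: let `A` and `A' = A + P` be real
symmetric matrices (dimension `n + 2 ≥ 2`) with sorted eigenvalues `lam` of `A` and `mu`
of `A'`, and spectral gap `g = λ_top - λ_second > 0`.  Let `v` and `v'` be unit top
eigenvectors of `A` and `A'` with `⟨v, v'⟩ ≥ 0`, and let `p` bound the spectral norm of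
`P`.  Then `‖v - v'‖₂ ≤ 2√2·p/g`. -/
theorem davis_kahan_top_eigenvector (n : ℕ)
    (A P : Matrix (Fin (n + 2)) (Fin (n + 2)) ℝ) (hA : A.IsSymm) (hPsymm : P.IsSymm)
    (lam mu : Fin (n + 2) → ℝ) (hlam_mono : Monotone lam) (hmu_mono : Monotone mu)
    (hlam : A.charpoly.roots = ↑(List.ofFn lam))
    (hmu : (A + P).charpoly.roots = ↑(List.ofFn mu))
    (g : ℝ) (hg : g = lam (Fin.last (n + 1)) - lam ⟨n, by omega⟩) (hgpos : 0 < g)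
    (p : ℝ)
    (hPnorm : ∀ x : Fin (n + 2) → ℝ,
      Real.sqrt (∑ k, (P.mulVec x k) ^ 2) ≤ p * Real.sqrt (∑ k, (x k) ^ 2))
    (v v' : Fin (n + 2) → ℝ)
    (hv_unit : Real.sqrt (∑ k, (v k) ^ 2) = 1)
    (hv'_unit : Real.sqrt (∑ k, (v' k) ^ 2) = 1)
    (hv : A.mulVec v = lam (Fin.last (n + 1)) • v)
    (hv' : (A + P).mulVec v' = mu (Fin.last (n + 1)) • v')
    (hinner : 0 ≤ ∑ k, v k * v' k) :
    Real.sqrt (∑ k, (v k - v' k) ^ 2) ≤ 2 * Real.sqrt 2 * p / g := by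
  have hn : Module.finrank ℝ (EuclideanSpace ℝ (Fin (n + 2))) = n + 2 :=
    finrank_euclideanSpace_fin
  have hT := Matrix.isSymmetric_toEuclideanLin_iff.mpr (Matrix.isHermitian_iff_isSymm.mpr hA)
  have hT' : (Matrix.toEuclideanLin A + Matrix.toEuclideanLin P).IsSymmetric := by
    rw [← map_add]
    exact Matrix.isSymmetric_toEuclideanLin_iff.mpr
      (Matrix.isHermitian_iff_isSymm.mpr (hA.add hPsymm))
  have hlam' := hT.eigenvalues_eq_comp_rev hn hlam_mono (by rwa [Matrix.charpoly_toEuclideanLin])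
  have hmu' := hT'.eigenvalues_eq_comp_rev hn hmu_mono
    (by rwa [← map_add, Matrix.charpoly_toEuclideanLin])
  have hrev1 : Fin.rev (1 : Fin (n + 2)) = ⟨n, by omega⟩ := by ext; simp
  have hA0 : hT.eigenvalues hn 0 = lam (Fin.last (n + 1)) := by
    rw [hlam', Function.comp_apply, Fin.rev_zero]
  have hA1 : hT.eigenvalues hn 1 = lam ⟨n, by omega⟩ := by rw [hlam', Function.comp_apply, hrev1]
  have hAP0 : hT'.eigenvalues hn 0 = mu (Fin.last (n + 1)) := by
    rw [hmu', Function.comp_apply, Fin.rev_zero]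
  have key := hT.norm_sub_le_of_apply_eq_eigenvalues_zero hT' hn (v := WithLp.toLp 2 v)
    (v' := WithLp.toLp 2 v') (p := p)
    (fun x => by simpa [EuclideanSpace.norm_eq] using hPnorm x.ofLp)
    (by linarith) (by rw [EuclideanSpace.norm_toLp_real, hv_unit])
    (by rw [EuclideanSpace.norm_toLp_real, hv'_unit])
    (by simp [hA0, hv]) (by simp [hAP0, ← WithLp.toLp_add, ← Matrix.add_mulVec, hv'])
    (by rwa [EuclideanSpace.inner_toLp_real])
  rwa [hA0, hA1, ← hg, ← WithLp.toLp_sub, EuclideanSpace.norm_toLp_real] at key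
end
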